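/- Let $G$, $H$, $K$ be groups, $X \leq H \times G$ and $Y \leq K \times H$. There is an isomorphism of $(K,G)$-bisets $$\big((K \times H)/Y\big) \times_H \big((H \times G)/X\big) \cong \bigsqcup_{t \in [p_2(Y)\backslash H / p_1(X)]} (K \times G)/(Y * {}^{(t,1)}X),$$ where $(H\times G)/X$ is the $(H,G)$-biset with $h\cdot(a,b)X\cdot g = (ha, g^{-1}b)X$ and similarly for $(K\times H)/Y$. -/

import Mathlib

/-!
Every element of `((K × H) ⧸ Y) ×_H ((H × G) ⧸ X)` is the class of some `((k, 1)Y, (t, g)X)`,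
and the classes of `((a.1, 1)Y, (t, a.2)X)` and `((b.1, 1)Y, (t', b.2)X)` agree exactly when
`((a⁻¹b).1, h) ∈ Y` and `(t⁻¹ h t', (a⁻¹b).2) ∈ X` for some `h`. So `t` is determined up to
`p₂(Y) t p₁(X)`, and for fixed `t` the condition on `a⁻¹b` is membership in `Y * ⁽ᵗ'¹⁾X`.
Hence `(k, g) ↦ [(k, 1)Y, (t, g)X]` induces the isomorphism, which is equivariant by construction.
-/

variable {G H K : Type*} [Group G] [Group H] [Group K]

/-- The star (composition) product `Y * ⁽ᵗ'¹⁾X` of subgroups `Y ≤ K × H`, `X ≤ H × G`. -/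
def starSubgroup (X : Subgroup (H × G)) (Y : Subgroup (K × H)) (t : H) :
    Subgroup (K × G) where
  carrier := {p : K × G | ∃ h : H, (p.1, h) ∈ Y ∧ (t⁻¹ * h * t, p.2) ∈ X}
  one_mem' := ⟨1, by simp [← Prod.one_eq_mk], by simp [← Prod.one_eq_mk]⟩
  mul_mem' := by
    rintro a b ⟨h, hY, hX⟩ ⟨h', hY', hX'⟩
    refine ⟨h * h', ?_, ?_⟩
    · exact Y.mul_mem hY hY'
    · have : ((t⁻¹ * (h * h') * t : H), (a.2 * b.2 : G)) =
        ((t⁻¹ * h * t, a.2) : H × G) * (t⁻¹ * h' * t, b.2) := by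
        ext <;> simp <;> group
      rw [show ((a * b : K × G).2) = a.2 * b.2 from rfl, this]
      exact X.mul_mem hX hX'
  inv_mem' := by
    rintro a ⟨h, hY, hX⟩
    refine ⟨h⁻¹, ?_, ?_⟩
    · have : ((a.1⁻¹ : K), h⁻¹) = ((a.1, h) : K × H)⁻¹ := rfl
      rw [show ((a⁻¹ : K × G).1) = a.1⁻¹ from rfl, this]
      exact Y.inv_mem hY
    · have : ((t⁻¹ * h⁻¹ * t : H), (a.2⁻¹ : G)) = ((t⁻¹ * h * t, a.2) : H × G)⁻¹ := by
        ext <;> simp <;> group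
      rw [show ((a⁻¹ : K × G).2) = a.2⁻¹ from rfl, this]
      exact X.inv_mem hX

/-- The relation on `V × U` whose quotient is `V ×_H U`: `(v,u) ∼ (v·h, h⁻¹·u)`.
Here `V = (K×H)/Y` and `U = (H×G)/X`, with right `H`-action `v·h = (1,h⁻¹)•v` and
left `H`-action `h•u = (h,1)•u`. -/
def prodRel (X : Subgroup (H × G)) (Y : Subgroup (K × H))
    (p q : ((K × H) ⧸ Y) × ((H × G) ⧸ X)) : Prop :=
  ∃ h : H, q = ((((1 : K), h⁻¹) : K × H) • p.1, ((h⁻¹, (1 : G)) : H × G) • p.2)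

namespace Biset

variable (X : Subgroup (H × G)) (Y : Subgroup (K × H))

theorem prodRel_equivalence : Equivalence (prodRel X Y) where
  refl p := ⟨1, by simp [← Prod.one_eq_mk]⟩
  symm := by
    rintro p q ⟨h, rfl⟩
    exact ⟨h⁻¹, by simp [smul_smul, ← Prod.one_eq_mk]⟩
  trans := by
    rintro p q r ⟨h, rfl⟩ ⟨h', rfl⟩
    exact ⟨h * h', by simp [smul_smul]⟩

def mackeyMk (t : H) (a : K × G) : Quot (prodRel X Y) :=
  Quot.mk _ ((((a.1, 1) : K × H) : (K × H) ⧸ Y), (((t, a.2) : H × G) : (H × G) ⧸ X))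

theorem mackeyMk_eq_mackeyMk_iff (t t' : H) (a b : K × G) :
    mackeyMk X Y t a = mackeyMk X Y t' b ↔
      ∃ h : H, ((a⁻¹ * b).1, h) ∈ Y ∧ (t⁻¹ * h * t', (a⁻¹ * b).2) ∈ X := by
  rw [mackeyMk, mackeyMk, Quot.eq, (prodRel_equivalence X Y).eqvGen_iff]
  refine exists_congr fun h => ?_
  rw [Prod.ext_iff, eq_comm, and_comm, eq_comm, and_comm]
  simp only [MulAction.Quotient.smul_coe, QuotientGroup.eq]
  simp [mul_assoc]

theorem exists_mackeyMk_eq (x : Quot (prodRel X Y)) : ∃ t a, mackeyMk X Y t a = x := by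
  obtain ⟨⟨v, u⟩⟩ := x
  induction v using QuotientGroup.induction_on with | H p => ?_
  induction u using QuotientGroup.induction_on with | H q => ?_
  refine ⟨p.2⁻¹ * q.1, (p.1, q.2), Quot.sound ⟨p.2⁻¹, ?_⟩⟩
  simp

theorem mackeyMk_eq_mackeyMk_iff_mk_eq (t : H) (a b : K × G) :
    mackeyMk X Y t a = mackeyMk X Y t b ↔ (a : (K × G) ⧸ starSubgroup X Y t) = b :=
  (mackeyMk_eq_mackeyMk_iff X Y t t a b).trans (QuotientGroup.eq (s := starSubgroup X Y t)).symm

def mackeyLift (t : H) : (K × G) ⧸ starSubgroup X Y t → Quot (prodRel X Y) :=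
  Quotient.lift (mackeyMk X Y t) fun a b hab =>
    (mackeyMk_eq_mackeyMk_iff_mk_eq X Y t a b).2 (Quotient.sound hab)

/-- `c = (k, g)` acts as `v ↦ k • v` on the left factor and `u ↦ u • g⁻¹` on the right one. -/
def bisetSMul (c : K × G) : Quot (prodRel X Y) → Quot (prodRel X Y) :=
  Quot.map (fun vu => (((c.1, 1) : K × H) • vu.1, ((1, c.2) : H × G) • vu.2)) <| by
    rintro ⟨v, u⟩ _ ⟨h, rfl⟩
    exact ⟨h, by simp only [smul_smul, Prod.mk_mul_mk, mul_one, one_mul]⟩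

theorem mackeyLift_smul (t : H) (c : K × G) (z : (K × G) ⧸ starSubgroup X Y t) :
    mackeyLift X Y t (c • z) = bisetSMul X Y c (mackeyLift X Y t z) := by
  induction z using QuotientGroup.induction_on with | H a => ?_
  change mackeyMk X Y t (c * a) = Quot.mk _ (_, _)
  simp [mackeyMk]

variable (T : Set H)

def mackeyMap (s : Σ t : T, (K × G) ⧸ starSubgroup X Y t) : Quot (prodRel X Y) :=
  mackeyLift X Y s.1 s.2

theorem mackeyMap_surjective
    (hT : ∀ h : H, ∃ t ∈ T, ∃ a ∈ Y.map (MonoidHom.snd K H), ∃ b ∈ X.map (MonoidHom.fst H G),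
      h = a * t * b) :
    Function.Surjective (mackeyMap X Y T) := by
  intro x
  obtain ⟨s, a, rfl⟩ := exists_mackeyMk_eq X Y x
  obtain ⟨t, ht, _, ⟨⟨κ, α⟩, hY, rfl⟩, _, ⟨⟨β, γ⟩, hX, rfl⟩, rfl⟩ := hT s
  refine ⟨⟨⟨t, ht⟩, (a * (κ, γ⁻¹) : K × G)⟩, ?_⟩
  refine (mackeyMk_eq_mackeyMk_iff X Y _ _ _ _).2 ⟨α⁻¹, ?_, ?_⟩
  · simpa using Y.inv_mem hY
  · simpa [mul_assoc] using hX

theorem mackeyMap_injective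
    (hT : ∀ t ∈ T, ∀ t' ∈ T, ∀ a ∈ Y.map (MonoidHom.snd K H), ∀ b ∈ X.map (MonoidHom.fst H G),
      t' = a * t * b → t' = t) :
    Function.Injective (mackeyMap X Y T) := by
  rintro ⟨⟨t, ht⟩, z⟩ ⟨⟨t', ht'⟩, z'⟩ hzz'
  induction z using QuotientGroup.induction_on with | H a => ?_
  induction z' using QuotientGroup.induction_on with | H b => ?_
  obtain ⟨h, hY, hX⟩ := (mackeyMk_eq_mackeyMk_iff X Y t t' a b).1 hzz'
  obtain rfl : t' = t :=
    hT t ht t' ht' h⁻¹ ⟨_, Y.inv_mem hY, rfl⟩ (t⁻¹ * h * t') ⟨_, hX, rfl⟩ (by group)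
  exact congrArg (Sigma.mk _) ((mackeyMk_eq_mackeyMk_iff_mk_eq X Y _ a b).1 hzz')

theorem mackeyMap_smul (s : Σ t : T, (K × G) ⧸ starSubgroup X Y t) (c : K × G) :
    mackeyMap X Y T ⟨s.1, c • s.2⟩ = bisetSMul X Y c (mackeyMap X Y T s) :=
  mackeyLift_smul X Y s.1 c s.2

end Biset

open Biset in
/-- Mackey formula for composition of transitive bisets:
`((K×H)/Y) ×_H ((H×G)/X) ≅ ⨆ t ∈ [p₂(Y)\H/p₁(X)], (K×G)/(Y * ⁽ᵗ'¹⁾X)`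
as `(K,G)`-bisets. -/
theorem biset_mackey_formula (X : Subgroup (H × G)) (Y : Subgroup (K × H))
    (dcReps : Set H)
    (hreps : ∀ h : H, ∃! t : H, t ∈ dcReps ∧
      ∃ a ∈ Y.map (MonoidHom.snd K H), ∃ b ∈ X.map (MonoidHom.fst H G), h = a * t * b) :
    ∃ e : Quot (prodRel X Y) ≃ (Σ t : dcReps, (K × G) ⧸ starSubgroup X Y (t : H)),
      ∀ (k : K) (g : G) (p : K × H) (q : H × G),
        e (Quot.mk _ (((((k, (1:H)) : K × H) * p : K × H) : (K × H) ⧸ Y),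
            (((((1:H), g⁻¹) : H × G) * q : H × G) : (H × G) ⧸ X))) =
          ⟨(e (Quot.mk _ ((p : (K × H) ⧸ Y), (q : (H × G) ⧸ X)))).1,
            (((k, g⁻¹) : K × G)) • (e (Quot.mk _ ((p : (K × H) ⧸ Y), (q : (H × G) ⧸ X)))).2⟩ := by
  have hinj : ∀ t ∈ dcReps, ∀ t' ∈ dcReps, ∀ a ∈ Y.map (MonoidHom.snd K H),
      ∀ b ∈ X.map (MonoidHom.fst H G), t' = a * t * b → t' = t :=
    fun t ht t' ht' a ha b hb htt' => (hreps t').unique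
      ⟨ht', 1, one_mem _, 1, one_mem _, by simp⟩ ⟨ht, a, ha, b, hb, htt'⟩
  let e := Equiv.ofBijective (mackeyMap X Y dcReps)
    ⟨mackeyMap_injective X Y dcReps hinj, mackeyMap_surjective X Y dcReps fun h => (hreps h).exists⟩
  refine ⟨e.symm, fun k g p q => ?_⟩
  rw [Equiv.symm_apply_eq]
  set x : Quot (prodRel X Y) := Quot.mk _ ((p : (K × H) ⧸ Y), (q : (H × G) ⧸ X))
  exact ((mackeyMap_smul X Y dcReps (e.symm x) (k, g⁻¹)).trans
    (congrArg (bisetSMul X Y (k, g⁻¹)) (e.apply_symm_apply x))).symm
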